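/- Let (A, ·) be a (possibly non-unital) associative algebra over a field k and let f, g : A → A be linear maps that are both semi-homomorphisms, i.e. f(x·y) = f(x)·y = x·f(y) and g(x·y) = g(x)·y = x·g(y) for all x, y ∈ A. Define x ∘₁ y := f(x)·y and x ∘₂ y := g(x)·y. Then (A, ∘₁, ∘₂) is a matching dialgebra; that is, ∘₁ and ∘₂ are both associative and satisfy (x ∘₁ y) ∘₂ z = x ∘₁ (y ∘₂ z) and (x ∘₂ y) ∘₁ z = x ∘₂ (y ∘₁ z) for all x, y, z ∈ A. -/

import Mathlib

/-!
Both products have the form `x ∘ y = φ x * y`, and a semi-homomorphism `ψ` satisfies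
`ψ (a * y) = a * ψ y`. Hence `(x ∘_φ y) ∘_ψ z = ψ (φ x * y) * z = φ x * (ψ y * z) = x ∘_φ (y ∘_ψ z)`
for any choice of `φ, ψ ∈ {f, g}`, which covers all four identities at once.
-/

theorem map_mul_mul_eq_mul_map_mul {A : Type*} [Semigroup A] {ψ : A → A}
    (hψ : ∀ x y : A, ψ (x * y) = x * ψ y) (a y z : A) :
    ψ (a * y) * z = a * (ψ y * z) := by
  rw [hψ, mul_assoc]

theorem matching_dialgebra_of_two_semi_homomorphisms_general
    {k A : Type*} [Field k] [NonUnitalRing A] [Module k A]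
    (f g : A →ₗ[k] A)
    (hf2 : ∀ x y : A, f (x * y) = x * f y)
    (hg2 : ∀ x y : A, g (x * y) = x * g y)
    (o1 o2 : A → A → A)
    (ho1 : ∀ x y : A, o1 x y = f x * y)
    (ho2 : ∀ x y : A, o2 x y = g x * y) :
    (∀ x y z : A, o1 (o1 x y) z = o1 x (o1 y z)) ∧
    (∀ x y z : A, o2 (o2 x y) z = o2 x (o2 y z)) ∧
    (∀ x y z : A, o2 (o1 x y) z = o1 x (o2 y z)) ∧
    (∀ x y z : A, o1 (o2 x y) z = o2 x (o1 y z)) := by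
  simp only [ho1, ho2]
  exact ⟨fun x => map_mul_mul_eq_mul_map_mul hf2 (f x),
    fun x => map_mul_mul_eq_mul_map_mul hg2 (g x),
    fun x => map_mul_mul_eq_mul_map_mul hg2 (f x),
    fun x => map_mul_mul_eq_mul_map_mul hf2 (g x)⟩

/-- If `f` and `g` are semi-homomorphisms of a (possibly non-unital) associative
`k`-algebra `A`, i.e. `f (x * y) = f x * y = x * f y` and likewise for `g`, then
`x ∘₁ y := f x * y` and `x ∘₂ y := g x * y` make `A` a matching dialgebra. -/
theorem matching_dialgebra_of_two_semi_homomorphisms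
    {k A : Type*} [Field k] [NonUnitalRing A] [Module k A]
    [SMulCommClass k A A] [IsScalarTower k A A]
    (f g : A →ₗ[k] A)
    (hf1 : ∀ x y : A, f (x * y) = f x * y) (hf2 : ∀ x y : A, f (x * y) = x * f y)
    (hg1 : ∀ x y : A, g (x * y) = g x * y) (hg2 : ∀ x y : A, g (x * y) = x * g y)
    (o1 o2 : A → A → A)
    (ho1 : ∀ x y : A, o1 x y = f x * y)
    (ho2 : ∀ x y : A, o2 x y = g x * y) :
    (∀ x y z : A, o1 (o1 x y) z = o1 x (o1 y z)) ∧
    (∀ x y z : A, o2 (o2 x y) z = o2 x (o2 y z)) ∧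
    (∀ x y z : A, o2 (o1 x y) z = o1 x (o2 y z)) ∧
    (∀ x y z : A, o1 (o2 x y) z = o2 x (o1 y z)) :=
  matching_dialgebra_of_two_semi_homomorphisms_general f g hf2 hg2 o1 o2 ho1 ho2
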